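/- Let W be as in the context. Then for every t ∈ (0,T) and every x ∈ H with ⟨α,x⟩ = 0, the subdifferential of W at (t,x) is empty: D^{1,-}W(t,x) = ∅. -/

import Mathlib

open scoped InnerProductSpace

/-- `G(t) = ∫_t^T e^{λ(s−t)} ds`. -/
noncomputable def Gfun (T lam : ℝ) (t : ℝ) : ℝ := ∫ s in t..T, Real.exp (lam * (s - t))

/-- The glued candidate value function of the example of Section 3.1:
`W(t,x) = −G(t)|⟨α,x⟩| − ∫_t^T (1/2)⟨β,α⟩² G(s)² ds`. -/
noncomputable def Wfun {H : Type*} [NormedAddCommGroup H] [InnerProductSpace ℝ H]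
    (T lam : ℝ) (α β : H) (t : ℝ) (x : H) : ℝ :=
  -(Gfun T lam t * |⟪α, x⟫_ℝ|) - ∫ s in t..T, (1 / 2) * ⟪β, α⟫_ℝ ^ 2 * (Gfun T lam s) ^ 2

/-- The subdifferential `D^{1,-}v(t,x)` of a function `v : (0,T) × H → ℝ` at `(t,x)`:
pairs `(a,p) ∈ ℝ × H` such that
`v(s,y) − v(t,x) − ⟨p, y−x⟩ − a(s−t) ≥ o(‖y−x‖ + |s−t|)` as `(s,y) → (t,x)`. -/
def subDiff {H : Type*} [NormedAddCommGroup H] [InnerProductSpace ℝ H]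
    (T : ℝ) (v : ℝ → H → ℝ) (t : ℝ) (x : H) : Set (ℝ × H) :=
  { ap : ℝ × H | ∀ δ > (0 : ℝ), ∃ η > (0 : ℝ), ∀ s ∈ Set.Ioo (0 : ℝ) T, ∀ y : H,
      |s - t| < η → ‖y - x‖ < η →
        -(δ * (‖y - x‖ + |s - t|)) ≤ v s y - v t x - ⟪ap.2, y - x⟫_ℝ - ap.1 * (s - t) }

/-!
If `⟨α,x⟩ = 0`, then along the line `c ↦ x + cα` the function `W(t,·)` is `W(t,x) − G(t)‖α‖²|c|`,
a concave kink of positive slope `k = G(t)‖α‖²`. A subgradient `(a,p)` would give, at `y = x ± εα`,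
`−k ε ∓ ε⟨p,α⟩ ≥ −δ ε ‖α‖`; adding the two inequalities cancels `p` and forces `k ≤ δ‖α‖`,
which fails for `δ = k / (2‖α‖)`.
-/

theorem subDiff_eq_empty_of_kink {H : Type*} [NormedAddCommGroup H] [InnerProductSpace ℝ H]
    {T : ℝ} {v : ℝ → H → ℝ} {t : ℝ} (ht : t ∈ Set.Ioo 0 T) {x d : H} (hd : d ≠ 0)
    {k : ℝ} (hk : 0 < k) (hkink : ∀ c : ℝ, v t (x + c • d) - v t x ≤ -(k * |c|)) :
    subDiff T v t x = ∅ := by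
  refine Set.eq_empty_of_forall_notMem fun ⟨a, p⟩ hap => ?_
  have hd' : 0 < ‖d‖ := norm_pos_iff.mpr hd
  obtain ⟨η, hη, hsub⟩ := hap (k / (2 * ‖d‖)) (by positivity)
  set ε := η / (2 * ‖d‖) with hε
  have hεpos : 0 < ε := by positivity
  have hεd : ε * ‖d‖ < η := by
    rw [hε, div_mul_eq_mul_div, div_lt_iff₀ (by positivity)]
    nlinarith
  have bound : ∀ c : ℝ, |c| = ε →
      -(k / (2 * ‖d‖) * (ε * ‖d‖)) ≤ -(k * ε) - c * ⟪p, d⟫_ℝ := by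
    intro c hc
    have hnorm : ‖x + c • d - x‖ = ε * ‖d‖ := by
      rw [add_sub_cancel_left, norm_smul, Real.norm_eq_abs, hc]
    have h := hsub t ht (x + c • d) (by simpa using hη) (hnorm ▸ hεd)
    rw [hnorm, add_sub_cancel_left, real_inner_smul_right] at h
    simp only [sub_self, abs_zero, add_zero, mul_zero, sub_zero] at h
    linarith [hc ▸ hkink c]
  have hplus := bound ε (abs_of_pos hεpos)
  have hminus := bound (-ε) (by rw [abs_neg, abs_of_pos hεpos])
  have hhalf : k / (2 * ‖d‖) * (ε * ‖d‖) = k * ε / 2 := by field_simp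
  rw [hhalf] at hplus hminus
  linarith [mul_pos hk hεpos]

lemma Gfun_pos {T t : ℝ} (lam : ℝ) (h : t < T) : 0 < Gfun T lam t :=
  intervalIntegral.intervalIntegral_pos_of_pos_on
    (Continuous.intervalIntegrable (by fun_prop) _ _) (fun _ _ => Real.exp_pos _) h

lemma Wfun_add_smul_self_sub {H : Type*} [NormedAddCommGroup H] [InnerProductSpace ℝ H]
    (T lam : ℝ) (α β : H) (t : ℝ) {x : H} (hx : ⟪α, x⟫_ℝ = 0) (c : ℝ) :
    Wfun T lam α β t (x + c • α) - Wfun T lam α β t x = -(Gfun T lam t * ‖α‖ ^ 2 * |c|) := by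
  simp only [Wfun, hx, inner_add_right, real_inner_smul_right, real_inner_self_eq_norm_sq,
    zero_add, abs_zero, mul_zero, abs_mul, abs_sq]
  ring

theorem subdiff_of_W_empty_general
    {H : Type*} [NormedAddCommGroup H] [InnerProductSpace ℝ H]
    (T lam : ℝ) (α β : H) (hα : α ≠ 0)
    (t : ℝ) (ht : t ∈ Set.Ioo (0 : ℝ) T) (x : H) (hx : ⟪α, x⟫_ℝ = 0) :
    subDiff T (Wfun T lam α β) t x = ∅ :=
  subDiff_eq_empty_of_kink ht hα
    (mul_pos (Gfun_pos lam ht.2) (pow_pos (norm_pos_iff.mpr hα) 2))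
    fun c => (Wfun_add_smul_self_sub T lam α β t hx c).le

/-- On the hyperplane `⟨α,x⟩ = 0`, the subdifferential of `W` at `(t,x)` is empty. -/
theorem subdiff_of_W_empty
    {H : Type*} [NormedAddCommGroup H] [InnerProductSpace ℝ H] [CompleteSpace H]
    [TopologicalSpace.SeparableSpace H]
    (T lam : ℝ) (hT : 0 < T) (α β : H) (hα : α ≠ 0)
    (t : ℝ) (ht : t ∈ Set.Ioo (0 : ℝ) T) (x : H) (hx : ⟪α, x⟫_ℝ = 0) :
    subDiff T (Wfun T lam α β) t x = ∅ :=
  subdiff_of_W_empty_general T lam α β hα t ht x hx
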